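/- arXiv:1309.4946 — 2 statements merged into one kernel-verified Lean document; each statement's English description precedes it below -/
import Mathlib

section
/- Let I be an arbitrary index set and let X = ℝ^I carry the product topology. Every strongly continuous semigroup (T_t)_{t≥0} of continuous linear operators on X has an everywhere defined continuous linear generator A (i.e., A x = lim_{h→0⁺} h⁻¹ • (T_h x − x) exists for all x and A is continuous and linear), and for every x ∈ X and t ≥ 0 one has T_t x = ∑_{k=0}^∞ (t^k / k!) • A^k x, the series converging in the product topology. -/
/-!
Every continuous linear functional on `ℝ^I` depends on finitely many coordinates. By the uniform
boundedness principle, applied on a copy of the Baire space `ℝ^ℕ` inside `ℝ^I`, the rows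
`x ↦ T t x j` for `t ∈ [0, n]` even depend on one common finite set `G` of coordinates. So the
row `u t = (T t e_q j)_{q ∈ G}` lives in the finite-dimensional space `ℝ^G`, and the semigroup law
reads `u (s + t) = M t (u s)`, where `M t` is the transposed `G × G` block of `T t`.

Averaging `M` over a short interval gives an invertible operator expressing `u` through its
primitive, so `u` is differentiable at `0`; this defines the generator `A` row by row. Then `u`
solves `u' = B u` with `B` the transposed `G × G` block of `A`, hence `u t = exp (t B) (u 0)`, and
comparing right derivatives shows that `(A ^ N x) j` is the pairing of `B ^ N (u 0)` with `x`.
-/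

open Filter Topology Set

theorem exists_finset_forall_apply_eq_zero_of_eventually_abs_lt_one {ι K : Type*}
    (ψ : ι → (K → ℝ) →L[ℝ] ℝ) (hψ : ∀ᶠ y in 𝓝 0, ∀ i, |ψ i y| < 1) :
    ∃ S : Finset K, ∀ i x, (∀ k ∈ S, x k = 0) → ψ i x = 0 := by
  rw [Filter.Eventually, nhds_pi, Filter.mem_pi] at hψ
  obtain ⟨S, hS, U, hU, hsub⟩ := hψ
  refine ⟨hS.toFinset, fun i x hx => ?_⟩
  have hbound (c : ℝ) : |c| * |ψ i x| < 1 := by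
    have hcx : c • x ∈ S.pi U := fun k hk => by
      simpa [hx k (hS.mem_toFinset.2 hk)] using mem_of_mem_nhds (hU k)
    simpa [abs_mul] using hsub hcx i
  by_contra h
  simpa [h] using hbound |ψ i x|⁻¹

theorem ContinuousLinearMap.exists_finset_apply_eq_zero {K : Type*} (φ : (K → ℝ) →L[ℝ] ℝ) :
    ∃ S : Finset K, ∀ x, (∀ k ∈ S, x k = 0) → φ x = 0 := by
  have hφ : ∀ᶠ y in 𝓝 0, ∀ _ : Unit, |φ y| < 1 := by
    simpa using φ.continuous.abs.continuousAt.eventually_lt continuousAt_const (by simp)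
  obtain ⟨S, hS⟩ :=
    exists_finset_forall_apply_eq_zero_of_eventually_abs_lt_one (fun _ : Unit => φ) hφ
  exact ⟨S, hS ()⟩

theorem ContinuousLinearMap.ext_single {K : Type*} [DecidableEq K] {φ ψ : (K → ℝ) →L[ℝ] ℝ}
    (h : ∀ k, φ (Pi.single k 1) = ψ (Pi.single k 1)) : φ = ψ := by
  obtain ⟨S, hS⟩ := (φ - ψ).exists_finset_apply_eq_zero
  refine ContinuousLinearMap.ext fun x => sub_eq_zero.1 ?_
  set y : K → ℝ := ∑ k ∈ S, x k • Pi.single k 1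
  have hy : (φ - ψ) y = 0 := by simp [y, h]
  have hxy : (φ - ψ) (x - y) = 0 := hS _ fun k hk => by simp [y, Pi.single_apply, hk]
  rwa [map_sub, hy, sub_zero] at hxy

theorem finite_setOf_exists_apply_single_ne_zero {ι K : Type*} [DecidableEq K]
    (φ : ι → (K → ℝ) →L[ℝ] ℝ) (hφ : ∀ x, BddAbove (range fun i => |φ i x|)) :
    {k | ∃ i, φ i (Pi.single k 1) ≠ 0}.Finite := by
  classical
  by_contra hinf
  set e := Set.Infinite.natEmbedding _ hinf
  choose i hi using fun m => (e m).2
  set κ : ℕ → K := fun m => (e m : K)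
  have hκ : Function.Injective κ := Subtype.val_injective.comp e.injective
  have hext_cont : Continuous (Function.ExtendByZero.linearMap ℝ κ) := by
    refine continuous_pi fun k => ?_
    by_cases hk : ∃ m, κ m = k
    · obtain ⟨m, rfl⟩ := hk
      simpa only [Function.ExtendByZero.linearMap_apply, hκ.extend_apply] using continuous_apply m
    · simpa only [Function.ExtendByZero.linearMap_apply, Function.extend_apply' _ _ _ hk]
        using continuous_const
  set E : (ℕ → ℝ) →L[ℝ] (K → ℝ) := ⟨_, hext_cont⟩
  have hE (m : ℕ) : E (Pi.single m 1) = Pi.single (κ m) 1 := by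
    funext k
    change Function.extend κ _ (0 : K → ℝ) k = _
    by_cases hk : ∃ m', κ m' = k
    · obtain ⟨m', rfl⟩ := hk
      simp [hκ.extend_apply, Pi.single_apply, hκ.eq_iff]
    · have : k ≠ κ m := fun h => hk ⟨m, h.symm⟩
      simp [Function.extend_apply' _ _ _ hk, this]
  set ψ : ℕ → (ℕ → ℝ) →L[ℝ] ℝ := fun m => (φ (i m)).comp E
  have hequi : UniformEquicontinuous ((↑) ∘ ψ) :=
    (norm_withSeminorms ℝ ℝ).banach_steinhaus fun _ y =>
      (hφ (E y)).mono (by rintro _ ⟨m, rfl⟩; exact ⟨i m, rfl⟩)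
  have hsmall : ∀ᶠ y in 𝓝 0, ∀ m, |ψ m y| < 1 := by
    simpa [Real.dist_eq, abs_sub_comm] using
      Metric.equicontinuousAt_iff_right.1 (hequi.equicontinuous 0) 1 one_pos
  obtain ⟨S, hS⟩ := exists_finset_forall_apply_eq_zero_of_eventually_abs_lt_one ψ hsmall
  obtain ⟨m, hm⟩ := Infinite.exists_notMem_finset S
  refine hi m ?_
  simpa [ψ, hE] using hS m (Pi.single m 1) fun k hk => by simp [ne_of_mem_of_not_mem hk hm]

section CoeffFunctional

variable {I : Type*} (G : Finset I)

noncomputable def coeffFunctional : (G → ℝ) →ₗ[ℝ] (I → ℝ) →L[ℝ] ℝ where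
  toFun c := ∑ p : G, c p • ContinuousLinearMap.proj (p : I)
  map_add' c d := by simp [add_smul, Finset.sum_add_distrib]
  map_smul' a c := by simp [Finset.smul_sum, smul_smul]

theorem coeffFunctional_apply (c : G → ℝ) (x : I → ℝ) :
    coeffFunctional G c x = ∑ p : G, c p * x p := by
  simp [coeffFunctional]

theorem coeffFunctional_single [DecidableEq I] (c : G → ℝ) (k : I) :
    coeffFunctional G c (Pi.single k 1) = if h : k ∈ G then c ⟨k, h⟩ else 0 := by
  rw [coeffFunctional_apply]
  split_ifs with h
  · rw [Finset.sum_eq_single ⟨k, h⟩ (fun p _ hp => by simp [Subtype.ext_iff.not.1 hp])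
      (by simp)]
    simp
  · exact Finset.sum_eq_zero fun p _ => by simp [ne_of_mem_of_not_mem p.2 h]

theorem continuous_coeffFunctional_apply (x : I → ℝ) :
    Continuous fun c : G → ℝ => coeffFunctional G c x := by
  simp only [coeffFunctional_apply]
  fun_prop

theorem HasDerivWithinAt.coeffFunctional_apply {u : ℝ → G → ℝ} {u' : G → ℝ} {s : Set ℝ} {r : ℝ}
    (hu : HasDerivWithinAt u u' s r) (x : I → ℝ) :
    HasDerivWithinAt (fun r => coeffFunctional G (u r) x) (coeffFunctional G u' x) s r := by
  simp only [_root_.coeffFunctional_apply]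
  exact HasDerivWithinAt.fun_sum fun p _ => (hasDerivWithinAt_pi.1 hu p).mul_const (x p)

theorem eq_coeffFunctional_of_apply_single_eq_zero [DecidableEq I] (φ : (I → ℝ) →L[ℝ] ℝ)
    (hG : ∀ k ∉ G, φ (Pi.single k 1) = 0) :
    φ = coeffFunctional G (fun q => φ (Pi.single q 1)) :=
  ContinuousLinearMap.ext_single fun k => by
    rw [coeffFunctional_single]
    split_ifs with h
    · rfl
    · exact hG k h

variable [DecidableEq I]

/-- The transpose of the `G × G` block of `S`, acting on coefficient vectors. -/
noncomputable def dualBlock (S : (I → ℝ) →L[ℝ] (I → ℝ)) : (G → ℝ) →L[ℝ] (G → ℝ) :=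
  LinearMap.toContinuousLinearMap
    { toFun := fun c q => coeffFunctional G c (S (Pi.single q 1))
      map_add' := fun c d => by ext; simp
      map_smul' := fun a c => by ext; simp }

theorem dualBlock_apply (S : (I → ℝ) →L[ℝ] (I → ℝ)) (c : G → ℝ) (q : G) :
    dualBlock G S c q = coeffFunctional G c (S (Pi.single q 1)) := rfl

theorem dualBlock_id : dualBlock G (ContinuousLinearMap.id ℝ (I → ℝ)) = 1 := by
  ext c q
  simp [dualBlock_apply, coeffFunctional_single]

end CoeffFunctional

section Averaging

variable {E : Type*} [NormedAddCommGroup E] [NormedSpace ℝ E]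

theorem intervalIntegral_apply_eq_integral_add {f : ℝ → E} {M : ℝ → E →L[ℝ] E}
    (hM : Continuous M) {s ε : ℝ} (hε : 0 ≤ ε) (hfM : ∀ t ∈ Icc 0 ε, f (s + t) = M t (f s)) :
    (∫ t in 0..ε, M t) (f s) = ∫ t in s..s + ε, f t := by
  rw [ContinuousLinearMap.intervalIntegral_apply (hM.intervalIntegrable _ _),
    ← intervalIntegral.integral_congr fun t ht => hfM t (by rwa [uIcc_of_le hε] at ht),
    intervalIntegral.integral_comp_add_left, add_zero]

theorem exists_hasDerivWithinAt_Ici_of_eq_apply_add [CompleteSpace E] {f : ℝ → E}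
    {M : ℝ → E →L[ℝ] E} (hf : Continuous f) (hM : Continuous M) (hM0 : M 0 = 1) {δ : ℝ}
    (hδ : 0 < δ) (hfM : ∀ s ∈ Icc 0 δ, ∀ t ∈ Icc 0 δ, f (s + t) = M t (f s)) :
    ∃ f', HasDerivWithinAt f f' (Ici 0) 0 := by
  -- averaging `M` over a short interval gives an invertible operator, which then expresses `f`
  -- through its (differentiable) primitive
  have havg : Tendsto (fun ε : ℝ => ε⁻¹ • ∫ t in 0..ε, M t) (𝓝[>] 0) (𝓝 1) := by
    simpa [hM0] using (hM.integral_hasStrictDerivAt 0 0).hasDerivAt.tendsto_slope_zero_right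
  obtain ⟨ε, ⟨u, hu⟩, hε⟩ : ∃ ε, IsUnit (ε⁻¹ • ∫ t in 0..ε, M t) ∧ ε ∈ Ioc 0 δ :=
    ((havg.eventually (Units.isOpen.mem_nhds isUnit_one)).and (Ioc_mem_nhdsGT hδ)).exists
  set W : ℝ → E := fun s => ∫ t in 0..s, f t
  set D : E →L[ℝ] E := ↑u⁻¹
  have hfW : ∀ s ∈ Icc 0 δ, f s = D (ε⁻¹ • (W (s + ε) - W s)) := by
    intro s hs
    have hmul : (u : E →L[ℝ] E) (f s) = ε⁻¹ • (W (s + ε) - W s) := by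
      rw [hu, smul_apply, intervalIntegral_apply_eq_integral_add hM hε.1.le
        fun t ht => hfM s hs t ⟨ht.1, ht.2.trans hε.2⟩,
        intervalIntegral.integral_interval_sub_left (hf.intervalIntegrable _ _)
          (hf.intervalIntegrable _ _)]
    rw [← hmul, ← mul_apply_eq_comp, Units.inv_mul, one_apply_eq_self]
  have hW (s : ℝ) : HasDerivAt W (f s) s := (hf.integral_hasStrictDerivAt 0 s).hasDerivAt
  have hshift : HasDerivAt (fun s => W (s + ε)) (f ε) 0 := by
    simpa using (hW (0 + ε)).comp_add_const 0 ε
  have hg : HasDerivAt (fun s => D (ε⁻¹ • (W (s + ε) - W s))) (D (ε⁻¹ • (f ε - f 0))) 0 :=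
    D.hasFDerivAt.comp_hasDerivAt 0 ((hshift.sub (hW 0)).const_smul ε⁻¹)
  refine ⟨_, hg.hasDerivWithinAt.congr_of_eventuallyEq ?_ (hfW 0 ⟨le_rfl, hδ.le⟩)⟩
  filter_upwards [Icc_mem_nhdsGE hδ] with s hs using hfW s hs

end Averaging

theorem eqOn_exp_smul_apply_of_hasDerivWithinAt {V : Type*} [NormedAddCommGroup V]
    [NormedSpace ℝ V] [CompleteSpace V] {B : V →L[ℝ] V} {u : ℝ → V} {n : ℝ}
    (hu : ContinuousOn u (Icc 0 n))
    (hder : ∀ s ∈ Ico 0 n, HasDerivWithinAt u (B (u s)) (Ici s) s) :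
    EqOn u (fun t => NormedSpace.exp (t • B) (u 0)) (Icc 0 n) := by
  have hexp (t : ℝ) : HasDerivAt (fun s => NormedSpace.exp (s • B) (u 0))
      (B (NormedSpace.exp (t • B) (u 0))) t := by
    simpa using (hasDerivAt_exp_smul_const' B t).clm_apply (hasDerivAt_const t (u 0))
  exact ODE_solution_unique_of_mem_Icc_right (v := fun _ => B) (s := fun _ => univ)
    (fun _ _ => B.lipschitz.lipschitzOnWith) hu hder (fun _ _ => trivial)
    (fun t _ => (hexp t).continuousAt.continuousWithinAt) (fun t _ => (hexp t).hasDerivWithinAt)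
    (fun _ _ => trivial) (by simp)

section Semigroup

variable {I : Type*}

def IsGenerator (T : ℝ → (I → ℝ) →L[ℝ] (I → ℝ)) (A : (I → ℝ) →L[ℝ] (I → ℝ)) : Prop :=
  ∀ x, Tendsto (fun h : ℝ => h⁻¹ • (T h x - x)) (𝓝[>] 0) (𝓝 (A x))

theorem IsGenerator.hasDerivWithinAt_apply {T : ℝ → (I → ℝ) →L[ℝ] (I → ℝ)}
    {A : (I → ℝ) →L[ℝ] (I → ℝ)} (hA : IsGenerator T A)
    (hTadd : ∀ s t : ℝ, 0 ≤ s → 0 ≤ t → T (s + t) = (T s).comp (T t))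
    (x : I → ℝ) (j : I) {s : ℝ} (hs : 0 ≤ s) :
    HasDerivWithinAt (fun r => T r x j) (T s (A x) j) (Ici s) s := by
  refine HasDerivWithinAt.Ici_of_Ioi ((hasDerivWithinAt_iff_tendsto_slope' (lt_irrefl s)).2 ?_)
  have hshift : Tendsto (fun r => r - s) (𝓝[>] s) (𝓝[>] 0) :=
    tendsto_nhdsWithin_of_tendsto_nhds_of_eventually_within _
      ((continuous_sub_right s).tendsto' s 0 (sub_self s) |>.mono_left nhdsWithin_le_nhds)
      (eventually_nhdsWithin_of_forall fun r (hr : s < r) =>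
        show r - s ∈ Ioi 0 from sub_pos.2 hr)
  have hlim := ((continuous_apply j).tendsto _).comp
    (((T s).continuous.tendsto _).comp ((hA x).comp hshift))
  refine hlim.congr' (eventually_nhdsWithin_of_forall fun r hr => ?_)
  have hT : T r x = T s (T (r - s) x) := by
    rw [← ContinuousLinearMap.comp_apply, ← hTadd s (r - s) hs (sub_pos.2 hr).le, add_sub_cancel]
  simp [slope_fun_def, hT]

variable [DecidableEq I]

def rowSupport (T : ℝ → (I → ℝ) →L[ℝ] (I → ℝ)) (j : I) (n : ℝ) : Set I :=
  {k | ∃ t ∈ Icc 0 n, T t (Pi.single k 1) j ≠ 0}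

def rowVec (T : ℝ → (I → ℝ) →L[ℝ] (I → ℝ)) (G : Finset I) (j : I) (s : ℝ) : G → ℝ :=
  fun q => T s (Pi.single q 1) j

variable {T : ℝ → (I → ℝ) →L[ℝ] (I → ℝ)}

theorem finite_rowSupport (horbit : ∀ x : I → ℝ, ContinuousOn (fun t : ℝ => T t x) (Ici 0))
    (j : I) (n : ℝ) : (rowSupport T j n).Finite := by
  have hbdd (x : I → ℝ) : BddAbove (range fun t : Icc (0 : ℝ) n => |T t x j|) := by
    have h := (isCompact_Icc (a := 0) (b := n)).bddAbove_image
      ((continuous_apply j).comp_continuousOn (horbit x) |>.abs.mono Icc_subset_Ici_self)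
    rwa [image_eq_range] at h
  simpa [rowSupport] using finite_setOf_exists_apply_single_ne_zero
    (fun t : Icc (0 : ℝ) n => (ContinuousLinearMap.proj j).comp (T t)) hbdd

theorem apply_eq_coeffFunctional_rowVec {G : Finset I} {j : I} {n s : ℝ}
    (hG : rowSupport T j n ⊆ G) (hs : s ∈ Icc 0 n) (x : I → ℝ) :
    T s x j = coeffFunctional G (rowVec T G j s) x := by
  have hrow := eq_coeffFunctional_of_apply_single_eq_zero G
    ((ContinuousLinearMap.proj j).comp (T s)) fun k hk => by_contra fun h => hk (hG ⟨s, hs, h⟩)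
  exact congr($hrow x)

theorem exists_tendsto_slope_apply (hT0 : T 0 = ContinuousLinearMap.id ℝ (I → ℝ))
    (hTadd : ∀ s t : ℝ, 0 ≤ s → 0 ≤ t → T (s + t) = (T s).comp (T t))
    (horbit : ∀ x : I → ℝ, ContinuousOn (fun t : ℝ => T t x) (Ici 0)) (l : I) :
    ∃ α : (I → ℝ) →L[ℝ] ℝ,
      ∀ x, Tendsto (fun h : ℝ => h⁻¹ * (T h x l - x l)) (𝓝[>] 0) (𝓝 (α x)) := by
  set G := (finite_rowSupport horbit l 1).toFinset
  have hG : rowSupport T l 1 ⊆ G := (finite_rowSupport horbit l 1).coe_toFinset.symm.subset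
  have hmax (s : ℝ) : max s 0 ∈ Ici (0 : ℝ) := le_max_right s 0
  have hcont (x : I → ℝ) : Continuous fun s => T (max s 0) x :=
    (horbit x).comp_continuous (continuous_id.max continuous_const) hmax
  set f : ℝ → G → ℝ := fun s => rowVec T G l (max s 0)
  set M : ℝ → (G → ℝ) →L[ℝ] (G → ℝ) := fun t => dualBlock G (T (max t 0))
  have hf : Continuous f := continuous_pi fun q => (continuous_apply l).comp (hcont _)
  have hM : Continuous M := continuous_clm_apply.2 fun c => continuous_pi fun q => by
    simp only [M, dualBlock_apply]
    exact (coeffFunctional G c).continuous.comp (hcont _)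
  have hM0 : M 0 = 1 := by simp [M, hT0, dualBlock_id]
  have hfM : ∀ s ∈ Icc 0 1, ∀ t ∈ Icc 0 1, f (s + t) = M t (f s) := by
    intro s hs t ht
    funext q
    simp only [f, M, dualBlock_apply, max_eq_left hs.1, max_eq_left ht.1,
      max_eq_left (add_nonneg hs.1 ht.1), rowVec, hTadd s t hs.1 ht.1]
    exact apply_eq_coeffFunctional_rowVec hG hs _
  obtain ⟨f', hf'⟩ := exists_hasDerivWithinAt_Ici_of_eq_apply_add hf hM hM0 one_pos hfM
  refine ⟨coeffFunctional G f', fun x => ?_⟩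
  have hslope : Tendsto (fun h : ℝ => h⁻¹ • (f h - f 0)) (𝓝[>] 0) (𝓝 f') := by
    have h := (hasDerivWithinAt_iff_tendsto_slope' (lt_irrefl 0)).1 hf'.Ioi_of_Ici
    simp only [slope_fun_def, sub_zero, vsub_eq_sub] at h
    exact h
  refine ((continuous_coeffFunctional_apply G x).tendsto f' |>.comp hslope).congr' ?_
  filter_upwards [Ioc_mem_nhdsGT one_pos] with h hh
  have hx : x l = T 0 x l := by simp [hT0]
  simp only [Function.comp_apply, map_smul, map_sub, smul_apply, sub_apply, smul_eq_mul, f,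
    max_eq_left hh.1.le, max_self, hx,
    apply_eq_coeffFunctional_rowVec hG (Ioc_subset_Icc_self hh),
    apply_eq_coeffFunctional_rowVec hG (left_mem_Icc.2 zero_le_one)]

theorem exists_isGenerator (hT0 : T 0 = ContinuousLinearMap.id ℝ (I → ℝ))
    (hTadd : ∀ s t : ℝ, 0 ≤ s → 0 ≤ t → T (s + t) = (T s).comp (T t))
    (horbit : ∀ x : I → ℝ, ContinuousOn (fun t : ℝ => T t x) (Ici 0)) :
    ∃ A, IsGenerator T A := by
  choose α hα using exists_tendsto_slope_apply hT0 hTadd horbit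
  exact ⟨ContinuousLinearMap.pi α, fun x => tendsto_pi_nhds.2 fun l => hα l x⟩

theorem hasDerivWithinAt_rowVec
    (hTadd : ∀ s t : ℝ, 0 ≤ s → 0 ≤ t → T (s + t) = (T s).comp (T t))
    {A : (I → ℝ) →L[ℝ] (I → ℝ)} (hA : IsGenerator T A)
    {G : Finset I} {j : I} {n s : ℝ} (hG : rowSupport T j n ⊆ G) (hs : s ∈ Icc 0 n) :
    HasDerivWithinAt (rowVec T G j) (dualBlock G A (rowVec T G j s)) (Ici s) s :=
  hasDerivWithinAt_pi.2 fun q => by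
    simpa [rowVec, dualBlock_apply, apply_eq_coeffFunctional_rowVec hG hs] using
      hA.hasDerivWithinAt_apply hTadd (Pi.single q 1) j hs.1

theorem apply_pow_eq_coeffFunctional
    (hTadd : ∀ s t : ℝ, 0 ≤ s → 0 ≤ t → T (s + t) = (T s).comp (T t))
    {A : (I → ℝ) →L[ℝ] (I → ℝ)} (hA : IsGenerator T A)
    {G : Finset I} {j : I} {n : ℝ} (hG : rowSupport T j n ⊆ G) (N : ℕ) :
    ∀ s ∈ Ico 0 n, ∀ x,
      T s ((A ^ N) x) j = coeffFunctional G ((dualBlock G A ^ N) (rowVec T G j s)) x := by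
  induction N with
  | zero =>
    intro s hs x
    simpa using apply_eq_coeffFunctional_rowVec hG (Ico_subset_Icc_self hs) x
  | succ N ih =>
    intro s hs x
    -- both sides of `ih` agree on `[s, n)`, so their right derivatives at `s` agree
    have hlhs := hA.hasDerivWithinAt_apply hTadd ((A ^ N) x) j hs.1
    have hrhs := (((dualBlock G A ^ N).hasFDerivAt.comp_hasDerivWithinAt s
      (hasDerivWithinAt_rowVec hTadd hA hG (Ico_subset_Icc_self hs))).coeffFunctional_apply G x)
    have heq : (fun r => T r ((A ^ N) x) j) =ᶠ[𝓝[Ici s] s]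
        fun r => coeffFunctional G ((dualBlock G A ^ N) (rowVec T G j r)) x := by
      filter_upwards [Ico_mem_nhdsGE hs.2] with r hr using ih r ⟨hs.1.trans hr.1, hr.2⟩ x
    rw [pow_succ', mul_apply_eq_comp, pow_succ, mul_apply_eq_comp,
      (uniqueDiffOn_Ici s s self_mem_Ici).eq_deriv _ hlhs
        (hrhs.congr_of_eventuallyEq heq (ih s hs x))]

theorem tendsto_sum_pow_apply (hT0 : T 0 = ContinuousLinearMap.id ℝ (I → ℝ))
    (hTadd : ∀ s t : ℝ, 0 ≤ s → 0 ≤ t → T (s + t) = (T s).comp (T t))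
    (horbit : ∀ x : I → ℝ, ContinuousOn (fun t : ℝ => T t x) (Ici 0))
    {A : (I → ℝ) →L[ℝ] (I → ℝ)} (hA : IsGenerator T A)
    (x : I → ℝ) (j : I) {t : ℝ} (ht : 0 ≤ t) :
    Tendsto (fun N => ∑ k ∈ Finset.range N, t ^ k / (Nat.factorial k : ℝ) * (A ^ k) x j) atTop
      (𝓝 (T t x j)) := by
  set n := t + 1
  set G := (finite_rowSupport horbit j n).toFinset
  have hG : rowSupport T j n ⊆ G := (finite_rowSupport horbit j n).coe_toFinset.symm.subset
  have htn : t ∈ Icc 0 n := ⟨ht, by linarith⟩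
  set B := dualBlock G A
  set u := rowVec T G j
  have hu : ContinuousOn u (Icc 0 n) := continuousOn_pi.2 fun q =>
    ((continuous_apply j).comp_continuousOn (horbit _)).mono Icc_subset_Ici_self
  have hexp : u t = NormedSpace.exp (t • B) (u 0) :=
    eqOn_exp_smul_apply_of_hasDerivWithinAt hu
      (fun s hs => hasDerivWithinAt_rowVec hTadd hA hG (Ico_subset_Icc_self hs)) htn
  have hsum : HasSum (fun k => (t ^ k / (Nat.factorial k : ℝ)) • (B ^ k) (u 0)) (u t) := by
    rw [hexp]
    simpa [smul_pow, smul_smul, div_eq_inv_mul] using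
      (NormedSpace.exp_series_hasSum_exp' (𝕂 := ℝ) (t • B)).mapL
        (ContinuousLinearMap.apply ℝ _ (u 0))
  rw [apply_eq_coeffFunctional_rowVec hG htn x]
  refine ((continuous_coeffFunctional_apply G x).tendsto _ |>.comp hsum.tendsto_sum_nat).congr
    fun N => ?_
  simp only [Function.comp_apply, map_sum, map_smul, sum_apply, smul_apply, smul_eq_mul]
  refine Finset.sum_congr rfl fun k _ => ?_
  rw [← apply_pow_eq_coeffFunctional hTadd hA hG k 0 ⟨le_rfl, by positivity⟩, hT0]
  rfl

end Semigroup

/-- Every strongly continuous semigroup on an arbitrary product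
`ℝ^I` has an everywhere defined continuous linear generator `A` and is given
by the exponential series `T_t x = ∑_{k=0}^∞ (t^k/k!) • A^k x`. -/
theorem stmt5 {I : Type*}
    (T : ℝ → (I → ℝ) →L[ℝ] (I → ℝ))
    (hT0 : T 0 = ContinuousLinearMap.id ℝ (I → ℝ))
    (hTadd : ∀ s t : ℝ, 0 ≤ s → 0 ≤ t → T (s + t) = (T s).comp (T t))
    (horbit : ∀ x : I → ℝ, ContinuousOn (fun t : ℝ => T t x) (Set.Ici 0)) :
    ∃ A : (I → ℝ) →L[ℝ] (I → ℝ),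
      (∀ x : I → ℝ,
        Tendsto (fun h : ℝ => h⁻¹ • (T h x - x)) (𝓝[>] 0) (𝓝 (A x))) ∧
      ∀ x : I → ℝ, ∀ t : ℝ, 0 ≤ t →
        Tendsto (fun N : ℕ => ∑ k ∈ Finset.range N,
            (t ^ k / (Nat.factorial k : ℝ)) • (A ^ k) x) atTop (𝓝 (T t x)) := by
  classical
  obtain ⟨A, hA⟩ := exists_isGenerator hT0 hTadd horbit
  refine ⟨A, hA, fun x t ht => tendsto_pi_nhds.2 fun j => ?_⟩
  simpa [Finset.sum_apply] using tendsto_sum_pow_apply hT0 hTadd horbit hA x j ht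
end

section
/- Let ω = ℝ^ℕ carry the product topology and let A be a continuous linear operator on ω. If A generates a strongly continuous semigroup on ω, then A² also generates a strongly continuous semigroup on ω. -/
open Filter Topology Set

/-!
For each coordinate `n`, the functionals `x ↦ (T t x) n`, `0 ≤ t ≤ 1`, are pointwise bounded,
so by Banach–Steinhaus on the Fréchet space `ω` they are equicontinuous and hence all depend
only on the coordinates in one finite set `F`. Differentiating `T` shows that then every
`x ↦ (A ^ k x) n` depends only on `F` too, and the same holds for the powers of `B = A ^ 2`.
So the functionals `x ↦ (B ^ k x) n` lie in a finite-dimensional `B`-invariant space of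
functionals; transported to a finite-dimensional Banach algebra this gives
`(B ^ k x) n = χ (G ^ k)`, so `∑ tᵏ / k! • Bᵏ x` converges coordinatewise to `χ (exp (t • G))`,
and the semigroup law, the continuity of the orbits and the generator are inherited from the
exponential of `G`.
-/

open NormedSpace
open scoped Nat

section FiniteSupport

variable {ι : Type*}

theorem LinearMap.eq_sum_smul_proj_of_forall_eq_zero [DecidableEq ι] (ℓ : (ι → ℝ) →ₗ[ℝ] ℝ)
    (F : Finset ι) (hℓ : ∀ x, (∀ m ∈ F, x m = 0) → ℓ x = 0) :
    ℓ = ∑ m ∈ F, ℓ (Pi.single m 1) • LinearMap.proj m := by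
  ext x
  have h := hℓ (x - ∑ m ∈ F, x m • Pi.single m 1) fun m hm => by
    simp [Finset.sum_apply, Pi.single_apply, hm]
  rw [map_sub, sub_eq_zero, map_sum] at h
  simp [h, mul_comm]

theorem LinearMap.continuous_of_forall_eq_zero (ℓ : (ι → ℝ) →ₗ[ℝ] ℝ) (F : Finset ι)
    (hℓ : ∀ x, (∀ m ∈ F, x m = 0) → ℓ x = 0) : Continuous ℓ := by
  classical
  have hsum : ⇑ℓ = fun x => ∑ m ∈ F, ℓ (Pi.single m 1) * x m := by
    ext x
    conv_lhs => rw [ℓ.eq_sum_smul_proj_of_forall_eq_zero F hℓ]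
    simp
  rw [hsum]
  fun_prop

theorem eq_zero_of_forall_abs_mul_lt_one {a : ℝ} (h : ∀ c : ℝ, |c * a| < 1) : a = 0 := by
  by_contra ha
  simpa [inv_mul_cancel₀ ha] using h a⁻¹

theorem exists_finset_forall_eq_zero_of_bddAbove [Countable ι] {κ : Type*}
    (𝓕 : κ → (ι → ℝ) →L[ℝ] ℝ) (h𝓕 : ∀ x, BddAbove (range fun i => |𝓕 i x|)) :
    ∃ F : Finset ι, ∀ i x, (∀ m ∈ F, x m = 0) → 𝓕 i x = 0 := by
  have hequi : EquicontinuousAt (fun i => ⇑(𝓕 i)) 0 :=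
    ((norm_withSeminorms ℝ ℝ).banach_steinhaus fun _ x => h𝓕 x).equicontinuous 0
  obtain ⟨I, hI, V, hV, hIV⟩ := Filter.mem_pi.mp <|
    nhds_pi (a := (0 : ι → ℝ)) ▸ Metric.equicontinuousAt_iff_right.mp hequi 1 one_pos
  refine ⟨hI.toFinset, fun i x hx => eq_zero_of_forall_abs_mul_lt_one fun c => ?_⟩
  have hcx : c • x ∈ I.pi V := fun m hm => by
    simpa [hx m (hI.mem_toFinset.mpr hm)] using mem_of_mem_nhds (hV m)
  simpa [dist_eq_norm] using hIV hcx i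

end FiniteSupport

section Generator

variable {X : Type*} [AddCommGroup X] [Module ℝ X] [TopologicalSpace X]
  {T : ℝ → X →L[ℝ] X} {A : X →L[ℝ] X} {ℓ : X →L[ℝ] ℝ} {ε : ℝ}

theorem apply_generator_eq_zero_of_forall_Ico
    (hsg : ∀ s t : ℝ, 0 ≤ s → 0 ≤ t → T (s + t) = (T s).comp (T t)) {y : X}
    (hgen : Tendsto (fun h : ℝ => h⁻¹ • (T h y - y)) (𝓝[>] 0) (𝓝 (A y)))
    (hy : ∀ t ∈ Ico 0 ε, ℓ (T t y) = 0) : ∀ t ∈ Ico 0 ε, ℓ (T t (A y)) = 0 := by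
  intro t ht
  have hlim : Tendsto (fun h : ℝ => ℓ (T t (h⁻¹ • (T h y - y)))) (𝓝[>] 0)
      (𝓝 (ℓ (T t (A y)))) :=
    ((ℓ.comp (T t)).continuous.tendsto _).comp hgen
  refine tendsto_nhds_unique hlim (tendsto_const_nhds.congr' ?_)
  have hsmall : Ioo 0 (ε - t) ∈ 𝓝[>] (0 : ℝ) := Ioo_mem_nhdsGT (by linarith [ht.2])
  filter_upwards [hsmall] with h hh
  have hshift : T t (T h y) = T (t + h) y := by rw [hsg t h ht.1 hh.1.le]; rfl
  rw [map_smul, map_sub, hshift, map_smul, map_sub, hy t ht,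
    hy (t + h) ⟨by linarith [ht.1, hh.1], by linarith [hh.2]⟩, sub_zero, smul_zero]

theorem apply_generator_pow_eq_zero_of_forall_Ico
    (hsg : ∀ s t : ℝ, 0 ≤ s → 0 ≤ t → T (s + t) = (T s).comp (T t))
    (hgen : ∀ x, Tendsto (fun h : ℝ => h⁻¹ • (T h x - x)) (𝓝[>] 0) (𝓝 (A x))) {y : X}
    (hy : ∀ t ∈ Ico 0 ε, ℓ (T t y) = 0) (k : ℕ) : ∀ t ∈ Ico 0 ε, ℓ (T t ((A ^ k) y)) = 0 := by
  induction k with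
  | zero => simpa using hy
  | succ k ih =>
    rw [pow_succ', mul_apply_eq_comp]
    exact apply_generator_eq_zero_of_forall_Ico hsg (hgen _) ih

end Generator

def RowFinitePowers {ι : Type*} (B : (ι → ℝ) →L[ℝ] (ι → ℝ)) : Prop :=
  ∀ n, ∃ F : Finset ι, ∀ x : ι → ℝ, (∀ m ∈ F, x m = 0) → ∀ k : ℕ, (B ^ k) x n = 0

theorem RowFinitePowers.pow {ι : Type*} {B : (ι → ℝ) →L[ℝ] (ι → ℝ)} (hB : RowFinitePowers B)
    (j : ℕ) : RowFinitePowers (B ^ j) := fun n => by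
  obtain ⟨F, hF⟩ := hB n
  exact ⟨F, fun x hx k => by simpa only [← pow_mul] using hF x hx (j * k)⟩

theorem rowFinitePowers_of_isGenerator {ι : Type*} [Countable ι] {A : (ι → ℝ) →L[ℝ] (ι → ℝ)}
    {T : ℝ → (ι → ℝ) →L[ℝ] (ι → ℝ)} (hT0 : T 0 = ContinuousLinearMap.id ℝ (ι → ℝ))
    (hsg : ∀ s t : ℝ, 0 ≤ s → 0 ≤ t → T (s + t) = (T s).comp (T t))
    (hcont : ∀ x : ι → ℝ, ContinuousOn (fun t : ℝ => T t x) (Ici 0))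
    (hgen : ∀ x, Tendsto (fun h : ℝ => h⁻¹ • (T h x - x)) (𝓝[>] 0) (𝓝 (A x))) :
    RowFinitePowers A := by
  intro n
  have hbdd (x : ι → ℝ) : BddAbove (range fun t : Icc (0 : ℝ) 1 => |T t x n|) := by
    rw [← image_eq_range (fun t => |T t x n|)]
    exact isCompact_Icc.bddAbove_image <| continuous_abs.comp_continuousOn <|
      (continuous_apply n).comp_continuousOn ((hcont x).mono Icc_subset_Ici_self)
  obtain ⟨F, hF⟩ := exists_finset_forall_eq_zero_of_bddAbove
    (fun t : Icc (0 : ℝ) 1 => (ContinuousLinearMap.proj n).comp (T t)) hbdd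
  refine ⟨F, fun x hx k => ?_⟩
  have h := apply_generator_pow_eq_zero_of_forall_Ico (ℓ := ContinuousLinearMap.proj n) hsg hgen
    (fun t ht => hF ⟨t, Ico_subset_Icc_self ht⟩ x hx) k 0 ⟨le_rfl, one_pos⟩
  simpa [hT0] using h

section Exponential

variable {𝔸 : Type*} [NormedRing 𝔸] [NormedAlgebra ℝ 𝔸] [CompleteSpace 𝔸]

theorem hasSum_pow_div_factorial_mul_apply_pow (χ : 𝔸 →L[ℝ] ℝ) (G : 𝔸) (t : ℝ) :
    HasSum (fun k : ℕ => t ^ k / k ! * χ (G ^ k)) (χ (exp (t • G))) := by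
  convert χ.hasSum (exp_series_hasSum_exp' (𝕂 := ℝ) (t • G)) using 1
  ext k
  rw [smul_pow, smul_smul, map_smul, smul_eq_mul, div_eq_inv_mul]

theorem exp_add_smul (s t : ℝ) (G : 𝔸) : exp ((s + t) • G) = exp (s • G) * exp (t • G) := by
  let _ : NormedAlgebra ℚ 𝔸 := .restrictScalars ℚ ℝ 𝔸
  rw [add_smul, exp_add_of_commute (((Commute.refl G).smul_left s).smul_right t)]

theorem tsum_pow_div_factorial_mul_tsum_apply_pow_add (χ : 𝔸 →L[ℝ] ℝ) (G : 𝔸) (s t : ℝ) :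
    ∑' k : ℕ, s ^ k / k ! * ∑' j : ℕ, t ^ j / j ! * χ (G ^ (k + j)) =
      χ (exp ((s + t) • G)) := by
  have hinner (k : ℕ) :
      ∑' j : ℕ, t ^ j / j ! * χ (G ^ (k + j)) = χ (G ^ k * exp (t • G)) := by
    simpa [pow_add] using (hasSum_pow_div_factorial_mul_apply_pow
      (χ.comp (ContinuousLinearMap.mul ℝ 𝔸 (G ^ k))) G t).tsum_eq
  simp_rw [hinner]
  simpa [exp_add_smul] using (hasSum_pow_div_factorial_mul_apply_pow
    (χ.comp ((ContinuousLinearMap.mul ℝ 𝔸).flip (exp (t • G)))) G s).tsum_eq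

theorem hasDerivAt_apply_exp_smul (χ : 𝔸 →L[ℝ] ℝ) (G : 𝔸) (t : ℝ) :
    HasDerivAt (fun u : ℝ => χ (exp (u • G))) (χ (exp (t • G) * G)) t :=
  χ.hasFDerivAt.comp_hasDerivAt t (hasDerivAt_exp_smul_const G t)

end Exponential

theorem Module.End.exists_apply_pow_eq_apply_pow {V : Type*} [AddCommGroup V] [Module ℝ V]
    (f : Module.End ℝ V) (ψ : V →ₗ[ℝ] ℝ) {W : Submodule ℝ V} [FiniteDimensional ℝ W]
    (hW : ∀ w ∈ W, f w ∈ W) {v : V} (hv : v ∈ W) :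
    ∃ (d : ℕ) (G : (Fin d → ℝ) →L[ℝ] (Fin d → ℝ))
      (χ : ((Fin d → ℝ) →L[ℝ] (Fin d → ℝ)) →L[ℝ] ℝ), ∀ k, ψ ((f ^ k) v) = χ (G ^ k) := by
  let e := (Module.finBasis ℝ W).equivFun
  let G := LinearMap.toContinuousLinearMap (e.conj (f.restrict hW))
  let ψ' := LinearMap.toContinuousLinearMap (ψ ∘ₗ W.subtype ∘ₗ e.symm.toLinearMap)
  refine ⟨_, G, ψ'.comp (ContinuousLinearMap.apply ℝ _ (e ⟨v, hv⟩)), fun k => ?_⟩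
  have hpow : (G ^ k) (e ⟨v, hv⟩) =
      e ⟨(f ^ k) v, Module.End.pow_apply_mem_of_forall_mem k hW v hv⟩ := by
    induction k with
    | zero => simp
    | succ k ih =>
      rw [pow_succ', mul_apply_eq_comp, ih]
      simp [G, LinearEquiv.conj_apply, pow_succ', LinearMap.restrict_apply]
  simp [ψ', hpow]

theorem Module.End.dualMap_pow_apply {M : Type*} [AddCommGroup M] [Module ℝ M]
    (f : Module.End ℝ M) (ℓ : Module.Dual ℝ M) (k : ℕ) (x : M) :
    ((f.dualMap ^ k) ℓ) x = ℓ ((f ^ k) x) := by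
  induction k generalizing ℓ with
  | zero => simp
  | succ k ih =>
    rw [pow_succ, Module.End.mul_apply, ih, LinearMap.dualMap_apply, ← Module.End.mul_apply,
      ← pow_succ']

namespace RowFinitePowers

variable {ι : Type*} {B : (ι → ℝ) →L[ℝ] (ι → ℝ)} (hB : RowFinitePowers B)
include hB

theorem exists_apply_pow_eq (n : ι) (x : ι → ℝ) :
    ∃ (d : ℕ) (G : (Fin d → ℝ) →L[ℝ] (Fin d → ℝ))
      (χ : ((Fin d → ℝ) →L[ℝ] (Fin d → ℝ)) →L[ℝ] ℝ), ∀ k, (B ^ k) x n = χ (G ^ k) := by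
  classical
  obtain ⟨F, hF⟩ := hB n
  let W : Submodule ℝ (Module.Dual ℝ (ι → ℝ)) :=
    { carrier := {ℓ | ∀ x : ι → ℝ, (∀ m ∈ F, x m = 0) → ∀ k : ℕ, ℓ ((B ^ k) x) = 0}
      add_mem' := fun hℓ hℓ' x hx k => by
        rw [LinearMap.add_apply, hℓ x hx k, hℓ' x hx k, add_zero]
      zero_mem' := fun _ _ _ => rfl
      smul_mem' := fun c ℓ hℓ x hx k => by rw [LinearMap.smul_apply, hℓ x hx k, smul_zero] }
  have hW : W ≤ Submodule.span ℝ
      ↑(F.image fun m => (LinearMap.proj m : Module.Dual ℝ (ι → ℝ))) := fun ℓ hℓ => by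
    rw [ℓ.eq_sum_smul_proj_of_forall_eq_zero F fun x hx => by simpa using hℓ x hx 0]
    exact Submodule.sum_mem _ fun m hm =>
      Submodule.smul_mem _ _ (Submodule.subset_span (Finset.mem_image_of_mem _ hm))
  have : FiniteDimensional ℝ W := Submodule.finiteDimensional_of_le hW
  have hinv : ∀ ℓ ∈ W, B.toLinearMap.dualMap ℓ ∈ W := fun ℓ hℓ x hx k => by
    rw [LinearMap.dualMap_apply, ContinuousLinearMap.coe_coe, ← mul_apply_eq_comp, ← pow_succ']
    exact hℓ x hx (k + 1)
  obtain ⟨d, G, χ, h⟩ := Module.End.exists_apply_pow_eq_apply_pow _ (Module.Dual.eval ℝ _ x)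
    hinv (v := LinearMap.proj n) hF
  refine ⟨d, G, χ, fun k => ?_⟩
  rw [← h, Module.Dual.eval_apply, Module.End.dualMap_pow_apply,
    ← ContinuousLinearMap.toLinearMap_pow]
  rfl

theorem summable (t : ℝ) (x : ι → ℝ) (n : ι) :
    Summable fun k : ℕ => t ^ k / k ! * (B ^ k) x n := by
  obtain ⟨d, G, χ, h⟩ := hB.exists_apply_pow_eq n x
  simpa only [h] using (hasSum_pow_div_factorial_mul_apply_pow χ G t).summable

noncomputable def expSemigroupₗ (t : ℝ) : (ι → ℝ) →ₗ[ℝ] (ι → ℝ) where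
  toFun x n := ∑' k : ℕ, t ^ k / k ! * (B ^ k) x n
  map_add' x y := funext fun n => by
    simp only [map_add, Pi.add_apply, mul_add]
    exact (hB.summable t x n).tsum_add (hB.summable t y n)
  map_smul' c x := funext fun n => by
    simp only [map_smul, Pi.smul_apply, smul_eq_mul, RingHom.id_apply, mul_left_comm _ c]
    exact tsum_mul_left

noncomputable def expSemigroup (t : ℝ) : (ι → ℝ) →L[ℝ] (ι → ℝ) where
  toLinearMap := hB.expSemigroupₗ t
  cont := continuous_pi fun n => by
    obtain ⟨F, hF⟩ := hB n
    refine ((LinearMap.proj n).comp (hB.expSemigroupₗ t)).continuous_of_forall_eq_zero F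
      fun x hx => ?_
    show ∑' k : ℕ, t ^ k / k ! * (B ^ k) x n = 0
    simp only [hF x hx, mul_zero, tsum_zero]

theorem expSemigroup_apply (t : ℝ) (x : ι → ℝ) (n : ι) :
    hB.expSemigroup t x n = ∑' k : ℕ, t ^ k / k ! * (B ^ k) x n := rfl

theorem hasSum_expSemigroup (t : ℝ) (x : ι → ℝ) :
    HasSum (fun k : ℕ => (t ^ k / k !) • (B ^ k) x) (hB.expSemigroup t x) :=
  Pi.hasSum.mpr fun n => (hB.summable t x n).hasSum

theorem pow_expSemigroup_apply (t : ℝ) (x : ι → ℝ) (k : ℕ) (n : ι) :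
    (B ^ k) (hB.expSemigroup t x) n = ∑' j : ℕ, t ^ j / j ! * (B ^ (k + j)) x n := by
  refine (((ContinuousLinearMap.proj n).comp (B ^ k)).hasSum
    (hB.hasSum_expSemigroup t x)).tsum_eq.symm.trans ?_
  simp [pow_add, mul_apply_eq_comp]

theorem exists_expSemigroup_apply_eq (x : ι → ℝ) (n : ι) :
    ∃ (d : ℕ) (G : (Fin d → ℝ) →L[ℝ] (Fin d → ℝ))
      (χ : ((Fin d → ℝ) →L[ℝ] (Fin d → ℝ)) →L[ℝ] ℝ),
      (∀ k, (B ^ k) x n = χ (G ^ k)) ∧ ∀ t, hB.expSemigroup t x n = χ (exp (t • G)) := by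
  obtain ⟨d, G, χ, h⟩ := hB.exists_apply_pow_eq n x
  refine ⟨d, G, χ, h, fun t => ?_⟩
  rw [expSemigroup_apply]
  simpa only [h] using (hasSum_pow_div_factorial_mul_apply_pow χ G t).tsum_eq

theorem expSemigroup_zero : hB.expSemigroup 0 = ContinuousLinearMap.id ℝ (ι → ℝ) := by
  ext x n
  obtain ⟨d, G, χ, h, hexp⟩ := hB.exists_expSemigroup_apply_eq x n
  simpa [hexp] using (h 0).symm

theorem expSemigroup_add (s t : ℝ) :
    hB.expSemigroup (s + t) = (hB.expSemigroup s).comp (hB.expSemigroup t) := by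
  ext x n
  obtain ⟨d, G, χ, h, hexp⟩ := hB.exists_expSemigroup_apply_eq x n
  simp only [ContinuousLinearMap.comp_apply, hB.expSemigroup_apply s,
    hB.pow_expSemigroup_apply, h]
  rw [tsum_pow_div_factorial_mul_tsum_apply_pow_add, hexp]

theorem continuous_expSemigroup_apply (x : ι → ℝ) :
    Continuous fun t => hB.expSemigroup t x := continuous_pi fun n => by
  obtain ⟨d, G, χ, -, hexp⟩ := hB.exists_expSemigroup_apply_eq x n
  simp only [hexp]
  exact continuous_iff_continuousAt.mpr fun t => (hasDerivAt_apply_exp_smul χ G t).continuousAt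

theorem tendsto_expSemigroup (x : ι → ℝ) :
    Tendsto (fun h : ℝ => h⁻¹ • (hB.expSemigroup h x - x)) (𝓝[>] 0) (𝓝 (B x)) := by
  refine tendsto_pi_nhds.mpr fun n => ?_
  obtain ⟨d, G, χ, h, hexp⟩ := hB.exists_expSemigroup_apply_eq x n
  have hx : x n = χ (exp ((0 : ℝ) • G)) := by simpa [exp_zero] using h 0
  have hBx : B x n = χ (exp ((0 : ℝ) • G) * G) := by simpa [exp_zero] using h 1
  simpa [hexp, hx, hBx] using (hasDerivAt_apply_exp_smul χ G 0).tendsto_slope_zero_right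

end RowFinitePowers

/-- If a continuous linear operator `A` on `ω = ℝ^ℕ` generates a
strongly continuous semigroup, then so does `A²`. -/
theorem stmt12 (A : (ℕ → ℝ) →L[ℝ] (ℕ → ℝ))
    (hgen : ∃ T : ℝ → (ℕ → ℝ) →L[ℝ] (ℕ → ℝ),
      T 0 = ContinuousLinearMap.id ℝ (ℕ → ℝ) ∧
      (∀ s t : ℝ, 0 ≤ s → 0 ≤ t → T (s + t) = (T s).comp (T t)) ∧
      (∀ x : ℕ → ℝ, ContinuousOn (fun t : ℝ => T t x) (Set.Ici 0)) ∧
      ∀ x : ℕ → ℝ,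
        Tendsto (fun h : ℝ => h⁻¹ • (T h x - x)) (𝓝[>] 0) (𝓝 (A x))) :
    ∃ S : ℝ → (ℕ → ℝ) →L[ℝ] (ℕ → ℝ),
      S 0 = ContinuousLinearMap.id ℝ (ℕ → ℝ) ∧
      (∀ s t : ℝ, 0 ≤ s → 0 ≤ t → S (s + t) = (S s).comp (S t)) ∧
      (∀ x : ℕ → ℝ, ContinuousOn (fun t : ℝ => S t x) (Set.Ici 0)) ∧
      ∀ x : ℕ → ℝ,
        Tendsto (fun h : ℝ => h⁻¹ • (S h x - x)) (𝓝[>] 0) (𝓝 ((A ^ 2) x)) := by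
  obtain ⟨T, hT0, hsg, hcont, hgenA⟩ := hgen
  have hA2 := (rowFinitePowers_of_isGenerator hT0 hsg hcont hgenA).pow 2
  exact ⟨hA2.expSemigroup, hA2.expSemigroup_zero, fun s t _ _ => hA2.expSemigroup_add s t,
    fun x => (hA2.continuous_expSemigroup_apply x).continuousOn, hA2.tendsto_expSemigroup⟩
end
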